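/- Let (R, ∇R, ∇²R) be an Einstein algebraic two-jet on V (i.e. ric_R = c⟪·,·⟫ for some c ∈ ℝ, ∇ric = 0 and ∇²ric = 0), let S := Young(4,2)[(x₁,…,x₆) ↦ ∇²_{x₅,x₆}R(x₁,x₂,x₃,x₄)], and define ∇̃²_{x₅,x₆}r̃ic(x₂,x₄) := −Σᵢ S(eᵢ,x₂,eᵢ,x₄,x₅,x₆). Then for all x₂,x₄,x₅,x₆ ∈ V: ∇̃²_{x₅,x₆}r̃ic(x₂,x₄) = −4·( R*R(x₅,x₂,x₆,x₄) + R*R(x₅,x₄,x₆,x₂) ). -/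

import Mathlib

open scoped RealInnerProductSpace

namespace CurvJet

variable {V : Type*} [NormedAddCommGroup V] [InnerProductSpace ℝ V] {n : ℕ}

/-- Quadrilinear forms on `V`, the ambient space of algebraic curvature tensors. -/
abbrev Curv (V : Type*) [NormedAddCommGroup V] [InnerProductSpace ℝ V] : Type _ :=
  V →ₗ[ℝ] V →ₗ[ℝ] V →ₗ[ℝ] V →ₗ[ℝ] ℝ

/-- The underlying 4-argument function of a quadrilinear form. -/
def toFun4 (R : Curv V) : V → V → V → V → ℝ := fun z₁ z₂ z₃ z₄ => R z₁ z₂ z₃ z₄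

/-- `R` is an algebraic curvature tensor: antisymmetry in the first pair, pair symmetry,
and the first Bianchi identity. -/
def IsCurv (R : Curv V) : Prop :=
  (∀ x y z w, R x y z w = - R y x z w) ∧
  (∀ x y z w, R x y z w = R z w x y) ∧
  (∀ x y z w, R x y z w + R y z x w + R z x y w = 0)

/-- The Ricci tensor `ric_R(x,y) = -∑ᵢ R(x,eᵢ,y,eᵢ)`. -/
noncomputable def ric (e : OrthonormalBasis (Fin n) ℝ V) (R : Curv V) (x y : V) : ℝ :=
  - ∑ i, R x (e i) y (e i)

/-- The curvature endomorphism `R_{x,y}`, characterized by `⟪R_{x,y}z, w⟫ = R(x,y,z,w)`. -/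
noncomputable def curvEnd (e : OrthonormalBasis (Fin n) ℝ V) (R : Curv V) (x y z : V) : V :=
  ∑ i, R x y z (e i) • e i

/-- Action of an endomorphism `B` on a covariant 4-tensor by algebraic derivation. -/
def act4 (B : V → V) (A : V → V → V → V → ℝ) (x₁ x₂ x₃ x₄ : V) : ℝ :=
  -(A (B x₁) x₂ x₃ x₄ + A x₁ (B x₂) x₃ x₄ + A x₁ x₂ (B x₃) x₄ + A x₁ x₂ x₃ (B x₄))

/-- Action of an endomorphism `B` on a covariant 2-tensor by algebraic derivation. -/
def act2 (B : V → V) (A : V → V → ℝ) (x y : V) : ℝ :=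
  -(A (B x) y + A x (B y))

/-- `R*A` for a covariant 4-tensor `A`. -/
noncomputable def star4 (e : OrthonormalBasis (Fin n) ℝ V) (R : Curv V)
    (A : V → V → V → V → ℝ) (x₁ x₂ x₃ x₄ : V) : ℝ :=
  -((∑ j, act4 (curvEnd e R x₁ (e j)) A (e j) x₂ x₃ x₄)
    + (∑ j, act4 (curvEnd e R x₂ (e j)) A x₁ (e j) x₃ x₄)
    + (∑ j, act4 (curvEnd e R x₃ (e j)) A x₁ x₂ (e j) x₄)
    + (∑ j, act4 (curvEnd e R x₄ (e j)) A x₁ x₂ x₃ (e j)))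

/-- `R*A` for a covariant 2-tensor `A`. -/
noncomputable def star2 (e : OrthonormalBasis (Fin n) ℝ V) (R : Curv V)
    (A : V → V → ℝ) (x y : V) : ℝ :=
  -((∑ j, act2 (curvEnd e R x (e j)) A (e j) y)
    + (∑ j, act2 (curvEnd e R y (e j)) A x (e j)))

/-- The algebraic curvature tensor `R*R`. -/
noncomputable def RstarR (e : OrthonormalBasis (Fin n) ℝ V) (R : Curv V) :
    V → V → V → V → ℝ :=
  star4 e R (toFun4 R)

/-- Row symmetrization of the Young tableau with rows `{1,3}`, `{2,4}` on a 4-tensor. -/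
def rowSym22 (T : V → V → V → V → ℝ) (x₁ x₂ x₃ x₄ : V) : ℝ :=
  T x₁ x₂ x₃ x₄ + T x₃ x₂ x₁ x₄ + T x₁ x₄ x₃ x₂ + T x₃ x₄ x₁ x₂

/-- The Young symmetrizer of the tableau with rows `{1,3}`, `{2,4}` and columns
`{1,2}`, `{3,4}`, acting on 4-tensors. -/
def young22 (T : V → V → V → V → ℝ) (x₁ x₂ x₃ x₄ : V) : ℝ :=
  rowSym22 T x₁ x₂ x₃ x₄ - rowSym22 T x₂ x₁ x₃ x₄
    - rowSym22 T x₁ x₂ x₄ x₃ + rowSym22 T x₂ x₁ x₄ x₃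

/-- Row symmetrization of the Young tableau with rows `{1,3,5,6}`, `{2,4}` on a 6-tensor. -/
noncomputable def rowSym42 (T : V → V → V → V → V → V → ℝ) (x₁ x₂ x₃ x₄ x₅ x₆ : V) : ℝ :=
  ∑ σ : Equiv.Perm (Fin 4),
    (T (![x₁, x₃, x₅, x₆] (σ 0)) x₂ (![x₁, x₃, x₅, x₆] (σ 1)) x₄
        (![x₁, x₃, x₅, x₆] (σ 2)) (![x₁, x₃, x₅, x₆] (σ 3))
     + T (![x₁, x₃, x₅, x₆] (σ 0)) x₄ (![x₁, x₃, x₅, x₆] (σ 1)) x₂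
        (![x₁, x₃, x₅, x₆] (σ 2)) (![x₁, x₃, x₅, x₆] (σ 3)))

/-- The Young symmetrizer of the tableau on six slots with rows `{1,3,5,6}`, `{2,4}` and
columns `{1,2}`, `{3,4}`. -/
noncomputable def young42 (T : V → V → V → V → V → V → ℝ) (x₁ x₂ x₃ x₄ x₅ x₆ : V) : ℝ :=
  rowSym42 T x₁ x₂ x₃ x₄ x₅ x₆ - rowSym42 T x₂ x₁ x₃ x₄ x₅ x₆
    - rowSym42 T x₁ x₂ x₄ x₃ x₅ x₆ + rowSym42 T x₂ x₁ x₄ x₃ x₅ x₆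

/-- Row symmetrization of the Young tableau with rows `{1,3,5}`, `{2,4}` on a 5-tensor
(the fifth function argument is the slot lying in the first row). -/
noncomputable def rowSym5 (T : V → V → V → V → V → ℝ) (z₁ z₂ z₃ z₄ z₅ : V) : ℝ :=
  ∑ σ : Equiv.Perm (Fin 3),
    (T (![z₁, z₃, z₅] (σ 0)) z₂ (![z₁, z₃, z₅] (σ 1)) z₄ (![z₁, z₃, z₅] (σ 2))
     + T (![z₁, z₃, z₅] (σ 0)) z₄ (![z₁, z₃, z₅] (σ 1)) z₂ (![z₁, z₃, z₅] (σ 2)))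

/-- The Young symmetrizer of the tableau on five slots with rows `{1,3,5}`, `{2,4}` and
columns `{1,2}`, `{3,4}` (the fifth function argument is the slot in the first row). -/
noncomputable def young5 (T : V → V → V → V → V → ℝ) (z₁ z₂ z₃ z₄ z₅ : V) : ℝ :=
  rowSym5 T z₁ z₂ z₃ z₄ z₅ - rowSym5 T z₂ z₁ z₃ z₄ z₅
    - rowSym5 T z₁ z₂ z₄ z₃ z₅ + rowSym5 T z₂ z₁ z₄ z₃ z₅

/-- First-order jet conditions: each `∇ₓR` is a curvature tensor and the second Bianchi
identity holds. -/
def IsJet1 (D1 : V →ₗ[ℝ] Curv V) : Prop :=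
  (∀ x, IsCurv (D1 x)) ∧
  (∀ x y z u v, D1 x y z u v + D1 y z x u v + D1 z x y u v = 0)

/-- Second-order jet conditions: each `∇²_{x,y}R` is a curvature tensor, the second Bianchi
identity holds, and the Ricci identity `∇²_{x,y}R − ∇²_{y,x}R = R_{x,y}·R` holds. -/
def IsJet2 (e : OrthonormalBasis (Fin n) ℝ V) (R : Curv V)
    (D2 : V →ₗ[ℝ] V →ₗ[ℝ] Curv V) : Prop :=
  (∀ x y, IsCurv (D2 x y)) ∧
  (∀ x y z w u v, D2 x y z w u v + D2 x z w y u v + D2 x w y z u v = 0) ∧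
  (∀ x y z₁ z₂ z₃ z₄, D2 x y z₁ z₂ z₃ z₄ - D2 y x z₁ z₂ z₃ z₄ =
    act4 (curvEnd e R x y) (toFun4 R) z₁ z₂ z₃ z₄)

/-- Algebraic two-jet `(R, ∇R, ∇²R)`. -/
def IsTwoJet (e : OrthonormalBasis (Fin n) ℝ V) (R : Curv V)
    (D1 : V →ₗ[ℝ] Curv V) (D2 : V →ₗ[ℝ] V →ₗ[ℝ] Curv V) : Prop :=
  IsCurv R ∧ IsJet1 D1 ∧ IsJet2 e R D2

/-- `∇ₓric(y,z) = -∑ᵢ ∇ₓR(y,eᵢ,z,eᵢ)`. -/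
noncomputable def nablaRic (e : OrthonormalBasis (Fin n) ℝ V)
    (D1 : V →ₗ[ℝ] Curv V) (x y z : V) : ℝ :=
  - ∑ i, D1 x y (e i) z (e i)

/-- `∇²_{x,y}ric(z,w) = -∑ᵢ ∇²_{x,y}R(z,eᵢ,w,eᵢ)`. -/
noncomputable def nabla2Ric (e : OrthonormalBasis (Fin n) ℝ V)
    (D2 : V →ₗ[ℝ] V →ₗ[ℝ] Curv V) (x y z w : V) : ℝ :=
  - ∑ i, D2 x y z (e i) w (e i)

/-- The rough Laplacian `∇*∇R(z₁,z₂,z₃,z₄) = -∑ᵢ ∇²_{eᵢ,eᵢ}R(z₁,z₂,z₃,z₄)`. -/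
noncomputable def roughLap (e : OrthonormalBasis (Fin n) ℝ V)
    (D2 : V →ₗ[ℝ] V →ₗ[ℝ] Curv V) (z₁ z₂ z₃ z₄ : V) : ℝ :=
  - ∑ i, D2 (e i) (e i) z₁ z₂ z₃ z₄

/-- `∇ₓδ_yR(z,w) = -∑ᵢ ∇²_{x,eᵢ}R(eᵢ,y,z,w)`. -/
noncomputable def nablaDelta (e : OrthonormalBasis (Fin n) ℝ V)
    (D2 : V →ₗ[ℝ] V →ₗ[ℝ] Curv V) (x y z w : V) : ℝ :=
  - ∑ i, D2 x (e i) (e i) y z w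

/-- The two-jet is Einstein: `ric = c⟪·,·⟫`, `∇ric = 0` and `∇²ric = 0`. -/
def IsEinsteinJet (e : OrthonormalBasis (Fin n) ℝ V) (R : Curv V)
    (D1 : V →ₗ[ℝ] Curv V) (D2 : V →ₗ[ℝ] V →ₗ[ℝ] Curv V) : Prop :=
  (∃ c : ℝ, ∀ x y, ric e R x y = c * ⟪x, y⟫) ∧
  (∀ x y z, nablaRic e D1 x y z = 0) ∧
  (∀ x y z w, nabla2Ric e D2 x y z w = 0)


/-! Write `Q(a; b, c, d) := Σᵢ (R_{eᵢ,a}·R)(eᵢ, b, c, d)`. Expanding the Young symmetrizer, the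
contraction `∇̃²r̃ic` becomes a sum of traces of `∇²R`. Traces taken inside `∇²_{x,y}R` vanish
because `∇²ric = 0`, traces against the second derivative slot vanish by the contracted second
Bianchi identity, and traces against the first derivative slot are `±Q` by the Ricci identity;
altogether `∇̃²_{x₅,x₆}r̃ic(x₂,x₄)` is `-8` times a sum of four values of `Q`. On the other side,
`R*R` is a sum of four values of `Q` for any curvature tensor. If `ric = κ⟪·,·⟫`, then
`Q(a; b, c, d) = κ R(a,b,c,d)` plus quadratic contractions of `R`, and these have the pair
symmetries of a curvature tensor. Hence `R*R = 4Q` and `Q(a; b, c, d) = Q(c; d, a, b)`, and the two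
sides agree. -/

theorem IsCurv.antisymm_right {R : Curv V} (hR : IsCurv R) (x y z w : V) :
    R x y z w = -R x y w z := by
  linear_combination hR.2.1 x y z w + hR.1 z w x y - hR.2.1 w z x y

theorem IsCurv.swap_swap {R : Curv V} (hR : IsCurv R) (x y z w : V) :
    R x y z w = R y x w z := by
  linear_combination hR.1 x y z w - hR.antisymm_right y x z w

theorem IsCurv.apply_self_left {R : Curv V} (hR : IsCurv R) (x z w : V) : R x x z w = 0 := by
  linarith [hR.1 x x z w]

theorem IsCurv.apply_self_right {R : Curv V} (hR : IsCurv R) (x y z : V) : R x y z z = 0 := by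
  linarith [hR.antisymm_right x y z z]

theorem IsCurv.sub_swap_outer {R : Curv V} (hR : IsCurv R) (x y a b : V) :
    R x a b y - R y a b x = R x y b a := by
  linear_combination hR.2.1 x a b y - hR.2.1 y a b x + hR.2.2 b y x a - hR.1 b x y a
    - hR.1 x y b a

theorem apply_eq_sum_inner_mul (e : OrthonormalBasis (Fin n) ℝ V) (S : Curv V) (a b c d : V) :
    S a b c d = ∑ j, ⟪e j, a⟫ * S (e j) b c d := by
  conv_lhs => rw [← e.sum_repr' a]
  simp only [map_sum, map_smul, LinearMap.sum_apply, LinearMap.smul_apply, smul_eq_mul]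

section Traces

variable {e : OrthonormalBasis (Fin n) ℝ V}

theorem trace24_eq_zero {A : Curv V} (hric : ∀ x y, ric e A x y = 0) (b d : V) :
    ∑ i, A b (e i) d (e i) = 0 := by
  simpa [ric] using hric b d

theorem IsCurv.trace13_eq_zero {A : Curv V} (hA : IsCurv A) (hric : ∀ x y, ric e A x y = 0)
    (b d : V) : ∑ i, A (e i) b (e i) d = 0 := by
  simp only [hA.swap_swap (e _) b, trace24_eq_zero hric]

theorem IsCurv.trace14_eq_zero {A : Curv V} (hA : IsCurv A) (hric : ∀ x y, ric e A x y = 0)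
    (b d : V) : ∑ i, A (e i) b d (e i) = 0 := by
  simp only [hA.1 (e _) b, Finset.sum_neg_distrib, trace24_eq_zero hric, neg_zero]

theorem IsCurv.trace23_eq_zero {A : Curv V} (hA : IsCurv A) (hric : ∀ x y, ric e A x y = 0)
    (b d : V) : ∑ i, A b (e i) (e i) d = 0 := by
  simp only [hA.antisymm_right b (e _) (e _), Finset.sum_neg_distrib,
    trace24_eq_zero hric, neg_zero]

variable {D : V →ₗ[ℝ] Curv V}

theorem IsJet1.div3_eq_zero (hD : IsJet1 D) (hric : ∀ x y z, nablaRic e D x y z = 0)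
    (z w v : V) : ∑ i, D (e i) z w (e i) v = 0 := by
  have hB : ∑ i, (D (e i) z w (e i) v + D z w (e i) (e i) v + D w (e i) z (e i) v) = 0 :=
    Finset.sum_eq_zero fun i _ => hD.2 (e i) z w (e i) v
  rwa [Finset.sum_add_distrib, Finset.sum_add_distrib,
    (hD.1 z).trace23_eq_zero (hric z) w v, (hD.1 w).trace13_eq_zero (hric w) z v,
    add_zero, add_zero] at hB

theorem IsJet1.div1_eq_zero (hD : IsJet1 D) (hric : ∀ x y z, nablaRic e D x y z = 0)
    (y z w : V) : ∑ i, D (e i) (e i) y z w = 0 := by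
  simp only [fun i => (hD.1 (e i)).2.1 (e i) y z w, hD.div3_eq_zero hric]

theorem IsJet1.div2_eq_zero (hD : IsJet1 D) (hric : ∀ x y z, nablaRic e D x y z = 0)
    (y z w : V) : ∑ i, D (e i) y (e i) z w = 0 := by
  simp only [fun i => (hD.1 (e i)).1 y (e i) z w, Finset.sum_neg_distrib,
    hD.div1_eq_zero hric, neg_zero]

theorem IsJet1.div4_eq_zero (hD : IsJet1 D) (hric : ∀ x y z, nablaRic e D x y z = 0)
    (z w v : V) : ∑ i, D (e i) z w v (e i) = 0 := by
  simp only [fun i => (hD.1 (e i)).antisymm_right z w v (e i), Finset.sum_neg_distrib,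
    hD.div3_eq_zero hric, neg_zero]

end Traces

section Action

variable {R : Curv V}

theorem act4_antisymm_left (hR : IsCurv R) (B : V → V) (x y z w : V) :
    act4 B (toFun4 R) x y z w = -act4 B (toFun4 R) y x z w := by
  simp only [act4, toFun4]
  linear_combination -hR.1 (B x) y z w - hR.1 x (B y) z w - hR.1 x y (B z) w - hR.1 x y z (B w)

theorem act4_antisymm_right (hR : IsCurv R) (B : V → V) (x y z w : V) :
    act4 B (toFun4 R) x y z w = -act4 B (toFun4 R) x y w z := by
  simp only [act4, toFun4]
  linear_combination -hR.antisymm_right (B x) y z w - hR.antisymm_right x (B y) z w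
    - hR.antisymm_right x y (B z) w - hR.antisymm_right x y z (B w)

theorem act4_pair_symm (hR : IsCurv R) (B : V → V) (x y z w : V) :
    act4 B (toFun4 R) x y z w = act4 B (toFun4 R) z w x y := by
  simp only [act4, toFun4]
  linear_combination -hR.2.1 (B x) y z w - hR.2.1 x (B y) z w + hR.2.1 (B z) w x y
    + hR.2.1 z (B w) x y

theorem act4_bianchi (hR : IsCurv R) (B : V → V) (x y z w : V) :
    act4 B (toFun4 R) x y z w + act4 B (toFun4 R) y z x w + act4 B (toFun4 R) z x y w = 0 := by
  simp only [act4, toFun4]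
  linear_combination -hR.2.2 (B x) y z w - hR.2.2 x (B y) z w - hR.2.2 x y (B z) w
    - hR.2.2 x y z (B w)

variable (e : OrthonormalBasis (Fin n) ℝ V)

theorem act4_curvEnd (u v x y z w : V) :
    act4 (curvEnd e R u v) (toFun4 R) x y z w =
      -(∑ j, R u v x (e j) * R (e j) y z w) - (∑ j, R u v y (e j) * R x (e j) z w)
        - (∑ j, R u v z (e j) * R x y (e j) w) - (∑ j, R u v w (e j) * R x y z (e j)) := by
  simp only [act4, toFun4, curvEnd, map_sum, map_smul, LinearMap.sum_apply,
    LinearMap.smul_apply, smul_eq_mul]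
  ring

theorem act4_curvEnd_swap (hR : IsCurv R) (u v x y z w : V) :
    act4 (curvEnd e R u v) (toFun4 R) x y z w = -act4 (curvEnd e R v u) (toFun4 R) x y z w := by
  simp only [act4_curvEnd, hR.1 u v, neg_mul, Finset.sum_neg_distrib]
  ring

end Action

noncomputable def curvActDiv (e : OrthonormalBasis (Fin n) ℝ V) (R : Curv V) (a b c d : V) : ℝ :=
  ∑ i, act4 (curvEnd e R (e i) a) (toFun4 R) (e i) b c d

section CurvActDiv

variable (e : OrthonormalBasis (Fin n) ℝ V) {R : Curv V}

theorem curvActDiv_bianchi (hR : IsCurv R) (a y z w : V) :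
    curvActDiv e R a y z w = curvActDiv e R a z y w - curvActDiv e R a w y z := by
  simp only [curvActDiv, ← Finset.sum_sub_distrib]
  refine Finset.sum_congr rfl fun i _ => ?_
  linear_combination act4_bianchi hR (curvEnd e R (e i) a) (e i) y z w
    - act4_pair_symm hR (curvEnd e R (e i) a) y z (e i) w
    - act4_antisymm_left hR (curvEnd e R (e i) a) z (e i) y w

theorem RstarR_eq_sum_curvActDiv (hR : IsCurv R) (x₁ x₂ x₃ x₄ : V) :
    RstarR e R x₁ x₂ x₃ x₄ = curvActDiv e R x₁ x₂ x₃ x₄ + curvActDiv e R x₂ x₁ x₄ x₃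
      + curvActDiv e R x₃ x₄ x₁ x₂ + curvActDiv e R x₄ x₃ x₂ x₁ := by
  have h₁ : ∀ j, act4 (curvEnd e R x₁ (e j)) (toFun4 R) (e j) x₂ x₃ x₄ =
      -act4 (curvEnd e R (e j) x₁) (toFun4 R) (e j) x₂ x₃ x₄ := fun j =>
    act4_curvEnd_swap e hR _ _ _ _ _ _
  have h₂ : ∀ j, act4 (curvEnd e R x₂ (e j)) (toFun4 R) x₁ (e j) x₃ x₄ =
      -act4 (curvEnd e R (e j) x₂) (toFun4 R) (e j) x₁ x₄ x₃ := fun j => by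
    rw [act4_antisymm_left hR, act4_antisymm_right hR, neg_neg, act4_curvEnd_swap e hR]
  have h₃ : ∀ j, act4 (curvEnd e R x₃ (e j)) (toFun4 R) x₁ x₂ (e j) x₄ =
      -act4 (curvEnd e R (e j) x₃) (toFun4 R) (e j) x₄ x₁ x₂ := fun j => by
    rw [act4_pair_symm hR, act4_curvEnd_swap e hR]
  have h₄ : ∀ j, act4 (curvEnd e R x₄ (e j)) (toFun4 R) x₁ x₂ x₃ (e j) =
      -act4 (curvEnd e R (e j) x₄) (toFun4 R) (e j) x₃ x₂ x₁ := fun j => by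
    rw [act4_pair_symm hR, act4_antisymm_left hR, act4_antisymm_right hR, neg_neg,
      act4_curvEnd_swap e hR]
  simp only [RstarR, star4, curvActDiv, h₁, h₂, h₃, h₄, Finset.sum_neg_distrib]
  ring

end CurvActDiv

section Jet2

variable {e : OrthonormalBasis (Fin n) ℝ V} {R : Curv V} {D2 : V →ₗ[ℝ] V →ₗ[ℝ] Curv V}

theorem IsJet2.isJet1 (hD : IsJet2 e R D2) (x : V) : IsJet1 (D2 x) :=
  ⟨hD.1 x, hD.2.1 x⟩

theorem IsJet2.div1_eq (hD : IsJet2 e R D2) (h2 : ∀ x y z w, nabla2Ric e D2 x y z w = 0)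
    (u y z w : V) : ∑ i, D2 (e i) u (e i) y z w = curvActDiv e R u y z w := by
  have hRicci : ∀ i, D2 (e i) u (e i) y z w =
      D2 u (e i) (e i) y z w + act4 (curvEnd e R (e i) u) (toFun4 R) (e i) y z w := fun i => by
    linarith [hD.2.2 (e i) u (e i) y z w]
  rw [Finset.sum_congr rfl fun i _ => hRicci i, Finset.sum_add_distrib,
    (hD.isJet1 u).div1_eq_zero (h2 u), zero_add, curvActDiv]

theorem IsJet2.div2_eq (hD : IsJet2 e R D2) (h2 : ∀ x y z w, nabla2Ric e D2 x y z w = 0)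
    (u y z w : V) : ∑ i, D2 (e i) u y (e i) z w = -curvActDiv e R u y z w := by
  simp only [fun i => (hD.1 (e i) u).1 y (e i) z w, Finset.sum_neg_distrib, hD.div1_eq h2]

theorem IsJet2.div3_eq (hD : IsJet2 e R D2) (h2 : ∀ x y z w, nabla2Ric e D2 x y z w = 0)
    (u y z w : V) : ∑ i, D2 (e i) u z w (e i) y = curvActDiv e R u y z w := by
  simp only [fun i => (hD.1 (e i) u).2.1 z w (e i) y, hD.div1_eq h2]

theorem IsJet2.div4_eq (hD : IsJet2 e R D2) (h2 : ∀ x y z w, nabla2Ric e D2 x y z w = 0)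
    (u y z w : V) : ∑ i, D2 (e i) u z w y (e i) = -curvActDiv e R u y z w := by
  simp only [fun i => (hD.1 (e i) u).antisymm_right z w y (e i), Finset.sum_neg_distrib,
    hD.div3_eq h2]

theorem IsJet2.laplacian_eq (hD : IsJet2 e R D2) (h2 : ∀ x y z w, nabla2Ric e D2 x y z w = 0)
    (z w u v : V) :
    ∑ i, D2 (e i) (e i) z w u v = curvActDiv e R z w u v - curvActDiv e R w z u v := by
  have hB : ∑ i, (D2 (e i) (e i) z w u v + D2 (e i) z w (e i) u v + D2 (e i) w (e i) z u v)
      = 0 := Finset.sum_eq_zero fun i _ => hD.2.1 (e i) (e i) z w u v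
  rw [Finset.sum_add_distrib, Finset.sum_add_distrib, hD.div2_eq h2, hD.div1_eq h2] at hB
  linarith

theorem IsJet2.laplacian_pair_symm (hD : IsJet2 e R D2)
    (h2 : ∀ x y z w, nabla2Ric e D2 x y z w = 0) (z w u v : V) :
    curvActDiv e R z w u v - curvActDiv e R w z u v =
      curvActDiv e R u v z w - curvActDiv e R v u z w := by
  rw [← hD.laplacian_eq h2, ← hD.laplacian_eq h2]
  exact Finset.sum_congr rfl fun i _ => (hD.1 (e i) (e i)).2.1 z w u v

end Jet2

section Young

theorem rowSym22_of_isCurv {A : Curv V} (hA : IsCurv A) (r b s d : V) :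
    rowSym22 (fun z₁ z₂ z₃ z₄ => A z₁ z₂ z₃ z₄) r b s d = 2 * (A r b s d + A s b r d) := by
  simp only [rowSym22]
  linear_combination hA.2.1 r d s b + hA.2.1 s d r b

/- The row permutations are grouped by the ordered pair of vectors they put into slots 5, 6. -/
theorem rowSym42_eq_sum_rowSym22 {E : Type*} (T : E → E → E → E → E → E → ℝ)
    (x₁ x₂ x₃ x₄ x₅ x₆ : E) :
    rowSym42 T x₁ x₂ x₃ x₄ x₅ x₆ =
      rowSym22 (T · · · · x₅ x₆) x₁ x₂ x₃ x₄ + rowSym22 (T · · · · x₆ x₅) x₁ x₂ x₃ x₄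
      + rowSym22 (T · · · · x₃ x₆) x₁ x₂ x₅ x₄ + rowSym22 (T · · · · x₆ x₃) x₁ x₂ x₅ x₄
      + rowSym22 (T · · · · x₃ x₅) x₁ x₂ x₆ x₄ + rowSym22 (T · · · · x₅ x₃) x₁ x₂ x₆ x₄
      + rowSym22 (T · · · · x₁ x₆) x₃ x₂ x₅ x₄ + rowSym22 (T · · · · x₆ x₁) x₃ x₂ x₅ x₄
      + rowSym22 (T · · · · x₁ x₅) x₃ x₂ x₆ x₄ + rowSym22 (T · · · · x₅ x₁) x₃ x₂ x₆ x₄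
      + rowSym22 (T · · · · x₁ x₃) x₅ x₂ x₆ x₄ + rowSym22 (T · · · · x₃ x₁) x₅ x₂ x₆ x₄ := by
  rw [rowSym42, show (1 : Fin 4) = Fin.succ 0 from rfl,
    show (2 : Fin 4) = Fin.succ (Fin.succ 0) from rfl,
    show (3 : Fin 4) = Fin.succ (Fin.succ (Fin.succ 0)) from rfl]
  simp only [← Equiv.Perm.decomposeFin.symm.sum_comp, Fintype.sum_prod_type, Fin.sum_univ_succ,
    Fintype.sum_unique, Equiv.Perm.decomposeFin_symm_apply_zero,
    Equiv.Perm.decomposeFin_symm_apply_succ]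
  simp only [Nat.succ_eq_add_one, Nat.reduceAdd, Fin.isValue, Matrix.cons_val_zero,
    Equiv.swap_self, Fin.succ_zero_eq_one, Equiv.refl_apply, Matrix.cons_val_one,
    Fin.succ_one_eq_two, Matrix.cons_val, Fin.default_eq_zero, Fin.reduceSucc,
    Equiv.swap_apply_right, Equiv.swap_apply_def, Fin.reduceEq, ↓reduceIte, one_ne_zero, rowSym22]
  abel

variable {e : OrthonormalBasis (Fin n) ℝ V} {R : Curv V} {D2 : V →ₗ[ℝ] V →ₗ[ℝ] Curv V}

theorem sum_young42_eq_curvActDiv (hR : IsCurv R) (hD : IsJet2 e R D2)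
    (h2 : ∀ x y z w, nabla2Ric e D2 x y z w = 0) (b d u v : V) :
    ∑ i, young42 (fun z₁ z₂ z₃ z₄ z₅ z₆ => D2 z₅ z₆ z₁ z₂ z₃ z₄) (e i) b (e i) d u v =
      8 * (curvActDiv e R u b v d + curvActDiv e R v b u d + curvActDiv e R u d v b
        + curvActDiv e R v d u b) := by
  simp only [young42, rowSym42_eq_sum_rowSym22, rowSym22_of_isCurv (hD.1 _ _),
    Finset.sum_sub_distrib, Finset.sum_add_distrib, ← Finset.mul_sum, Finset.sum_const_zero,
    fun x y => (hD.1 x y).apply_self_left, fun x y => (hD.1 x y).apply_self_right,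
    fun x y => (hD.1 x y).trace13_eq_zero (h2 x y), fun x y => (hD.1 x y).trace14_eq_zero (h2 x y),
    fun x y => (hD.1 x y).trace23_eq_zero (h2 x y),
    fun x y => trace24_eq_zero (A := D2 x y) (h2 x y),
    fun x => (hD.isJet1 x).div1_eq_zero (h2 x), fun x => (hD.isJet1 x).div2_eq_zero (h2 x),
    fun x => (hD.isJet1 x).div3_eq_zero (h2 x), fun x => (hD.isJet1 x).div4_eq_zero (h2 x),
    hD.div1_eq h2, hD.div2_eq h2, hD.div3_eq h2, hD.div4_eq h2, hD.laplacian_eq h2]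
  linarith [curvActDiv_bianchi e hR u v b d, curvActDiv_bianchi e hR v u b d,
    curvActDiv_bianchi e hR u v d b, curvActDiv_bianchi e hR v u d b,
    hD.laplacian_pair_symm h2 u b v d, hD.laplacian_pair_symm h2 v b u d]

end Young

section Einstein

noncomputable def pairContr (e : OrthonormalBasis (Fin n) ℝ V) (R : Curv V) (x y z w : V) : ℝ :=
  ∑ i, ∑ j, R x y (e i) (e j) * R z w (e i) (e j)

noncomputable def crossContr (e : OrthonormalBasis (Fin n) ℝ V) (R : Curv V) (x y z w : V) : ℝ :=
  ∑ i, ∑ j, R x (e i) y (e j) * R z (e i) w (e j)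

variable {e : OrthonormalBasis (Fin n) ℝ V} {R : Curv V}

theorem pairContr_comm (x y z w : V) : pairContr e R z w x y = pairContr e R x y z w := by
  simp only [pairContr, mul_comm]

theorem pairContr_swap_swap (hR : IsCurv R) (x y z w : V) :
    pairContr e R y x w z = pairContr e R x y z w := by
  simp only [pairContr, hR.1 y x, hR.1 w z, neg_mul_neg]

theorem crossContr_comm (x y z w : V) : crossContr e R z w x y = crossContr e R x y z w := by
  simp only [crossContr, mul_comm]

theorem crossContr_swap_swap (hR : IsCurv R) (x y z w : V) :
    crossContr e R y x w z = crossContr e R x y z w := by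
  rw [crossContr, crossContr, Finset.sum_comm]
  simp only [hR.2.1 y, hR.2.1 w]

theorem sum_sum_ric_mul {κ : ℝ} (hR : IsCurv R) (hric : ∀ x y, ric e R x y = κ * ⟪x, y⟫)
    (a b c d : V) :
    ∑ i, ∑ j, R (e i) a (e i) (e j) * R (e j) b c d = -(κ * R a b c d) := by
  have hcontr : ∀ j, ∑ i, R (e i) a (e i) (e j) = -(κ * ⟪e j, a⟫) := fun j => by
    have h := hric a (e j)
    rw [ric, real_inner_comm] at h
    rw [Finset.sum_congr rfl fun i _ => hR.swap_swap (e i) a (e i) (e j)]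
    linarith
  rw [Finset.sum_comm, apply_eq_sum_inner_mul e R a, Finset.mul_sum, ← Finset.sum_neg_distrib]
  simp only [← Finset.sum_mul, hcontr]
  ring_nf

variable (e) in
theorem two_mul_sum_sum_mul_pair (hR : IsCurv R) (a b c d : V) :
    2 * ∑ i, ∑ j, R (e i) a b (e j) * R (e i) (e j) c d = -pairContr e R a b c d := by
  have hpt : ∀ i j, R (e i) a b (e j) * R (e i) (e j) c d + R (e j) a b (e i) * R (e j) (e i) c d
      = -(R a b (e i) (e j) * R c d (e i) (e j)) := fun i j => by
    linear_combination R (e j) a b (e i) * hR.1 (e j) (e i) c d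
      + R (e i) (e j) c d * hR.sub_swap_outer (e i) (e j) a b
      + R (e i) (e j) c d * hR.2.1 (e i) (e j) b a + R b a (e i) (e j) * hR.2.1 (e i) (e j) c d
      + R c d (e i) (e j) * hR.1 b a (e i) (e j)
  rw [two_mul]
  nth_rewrite 2 [Finset.sum_comm]
  simp only [← Finset.sum_add_distrib, hpt, Finset.sum_neg_distrib, pairContr]

/- The four terms are `R_{eᵢ,a}` acting on the four slots of `R(eᵢ, b, c, d)`. -/
theorem curvActDiv_eq_of_ric {κ : ℝ} (hR : IsCurv R) (hric : ∀ x y, ric e R x y = κ * ⟪x, y⟫)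
    (a b c d : V) :
    curvActDiv e R a b c d = κ * R a b c d + pairContr e R a b c d / 2
      + crossContr e R a c b d - crossContr e R a d b c := by
  have hslot3 : ∑ i, ∑ j, R (e i) a c (e j) * R (e i) b (e j) d = -crossContr e R a c b d := by
    simp only [crossContr, ← Finset.sum_neg_distrib, hR.swap_swap (e _) a, hR.swap_swap (e _) b,
      hR.antisymm_right a (e _) (e _) c, neg_mul]
  have hslot4 : ∑ i, ∑ j, R (e i) a d (e j) * R (e i) b c (e j) = crossContr e R a d b c := by
    simp only [crossContr, hR.swap_swap (e _) a, hR.swap_swap (e _) b,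
      hR.antisymm_right a (e _) (e _) d, hR.antisymm_right b (e _) (e _) c, neg_mul_neg]
  simp only [curvActDiv, act4_curvEnd, Finset.sum_sub_distrib, Finset.sum_neg_distrib]
  linarith [sum_sum_ric_mul hR hric a b c d, two_mul_sum_sum_mul_pair e hR a b c d]

theorem curvActDiv_pair_symm_of_ric {κ : ℝ} (hR : IsCurv R)
    (hric : ∀ x y, ric e R x y = κ * ⟪x, y⟫) (a b c d : V) :
    curvActDiv e R c d a b = curvActDiv e R a b c d := by
  rw [curvActDiv_eq_of_ric hR hric, curvActDiv_eq_of_ric hR hric, hR.2.1 a b c d,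
    pairContr_comm a b c d, crossContr_swap_swap hR a c b d, crossContr_comm d a c b,
    crossContr_swap_swap hR a d b c]

theorem curvActDiv_swap_swap_of_ric {κ : ℝ} (hR : IsCurv R)
    (hric : ∀ x y, ric e R x y = κ * ⟪x, y⟫) (a b c d : V) :
    curvActDiv e R b a d c = curvActDiv e R a b c d := by
  rw [curvActDiv_eq_of_ric hR hric, curvActDiv_eq_of_ric hR hric, ← hR.swap_swap a b c d,
    pairContr_swap_swap hR a b c d, crossContr_comm a c b d, crossContr_comm a d b c]

theorem RstarR_eq_four_mul_curvActDiv {κ : ℝ} (hR : IsCurv R)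
    (hric : ∀ x y, ric e R x y = κ * ⟪x, y⟫) (x₁ x₂ x₃ x₄ : V) :
    RstarR e R x₁ x₂ x₃ x₄ = 4 * curvActDiv e R x₁ x₂ x₃ x₄ := by
  rw [RstarR_eq_sum_curvActDiv e hR, curvActDiv_swap_swap_of_ric hR hric x₃,
    curvActDiv_swap_swap_of_ric hR hric x₁, curvActDiv_pair_symm_of_ric hR hric x₁]
  ring

end Einstein

/-- For an Einstein two-jet, the Ricci tensor associated with the
Young(4,2)-symmetrized second covariant derivative is `−4(R*R(x₅,x₂,x₆,x₄)+R*R(x₅,x₄,x₆,x₂))`. -/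
theorem associated_nabla2Ric_einstein
    {V : Type*} [NormedAddCommGroup V] [InnerProductSpace ℝ V] {n : ℕ}
    (e : OrthonormalBasis (Fin n) ℝ V)
    (R : Curv V) (D1 : V →ₗ[ℝ] Curv V) (D2 : V →ₗ[ℝ] V →ₗ[ℝ] Curv V)
    (hjet : IsTwoJet e R D1 D2) (hE : IsEinsteinJet e R D1 D2) :
    ∀ x₂ x₄ x₅ x₆,
      -∑ i, young42 (fun z₁ z₂ z₃ z₄ z₅ z₆ => D2 z₅ z₆ z₁ z₂ z₃ z₄)
          (e i) x₂ (e i) x₄ x₅ x₆ =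
        -4 * (RstarR e R x₅ x₂ x₆ x₄ + RstarR e R x₅ x₄ x₆ x₂) := by
  obtain ⟨hR, -, hD⟩ := hjet
  obtain ⟨⟨κ, hric⟩, -, h2⟩ := hE
  intro x₂ x₄ x₅ x₆
  rw [sum_young42_eq_curvActDiv hR hD h2, RstarR_eq_four_mul_curvActDiv hR hric,
    RstarR_eq_four_mul_curvActDiv hR hric, curvActDiv_pair_symm_of_ric hR hric x₅ x₂,
    curvActDiv_pair_symm_of_ric hR hric x₅ x₄]
  ring

end CurvJet
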